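/- arXiv:2201.10100 — 2 statements merged into one kernel-verified Lean document; each statement's English description precedes it below -/
import Mathlib

section
/- For every p ≥ 1 and λ > 0, every minimizer Ω of E_{p,λ} in the class A satisfies H¹(∂Ω)/H²(Ω) = ((p+2)/(λ(p+3))) · min_{A} E_{p,λ}. -/
open MeasureTheory Metric Set Filter
open scoped Topology ENNReal NNReal

/-- The plane `ℝ²`. -/
abbrev Plane := EuclideanSpace ℝ (Fin 2)

/-- The average-distance term `∫_Ω dist(x, ∂Ω)^p dx`. -/
noncomputable def distInt (p : ℝ) (Ω : Set Plane) : ℝ :=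
  ∫ x in Ω, infDist x (frontier Ω) ^ p ∂μH[2]

/-- The perimeter `H¹(∂Ω)`. -/
noncomputable def perim (Ω : Set Plane) : ℝ :=
  (μH[1] (frontier Ω)).toReal

/-- The area `H²(Ω)`. -/
noncomputable def area (Ω : Set Plane) : ℝ :=
  (μH[2] Ω).toReal

/-- The energy `E_{p,λ}(Ω) = ∫_Ω dist(x,∂Ω)^p dx + λ H¹(∂Ω)/H²(Ω)`. -/
noncomputable def energy (p lam : ℝ) (Ω : Set Plane) : ℝ :=
  distInt p Ω + lam * (perim Ω / area Ω)

/-- The admissible class `A`: compact, convex subsets of `ℝ²` of Hausdorff dimension 2. -/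
def Adm (Ω : Set Plane) : Prop :=
  IsCompact Ω ∧ Convex ℝ Ω ∧ dimH Ω = 2

section Aux

open scoped Pointwise

lemma frontier_smul' {t : ℝ} (ht : t ≠ 0) (s : Set Plane) :
    frontier (t • s) = t • frontier s := by
  have := (Homeomorph.smulOfNeZero t ht).image_frontier s
  simpa using this.symm

lemma hmeas_smul (d : ℝ) (hd : 0 ≤ d) {t : ℝ} (ht : t ≠ 0) (s : Set Plane) :
    μH[d] (t • s) = ‖t‖₊ ^ d • μH[d] s :=
  MeasureTheory.Measure.hausdorffMeasure_smul₀ hd ht s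

lemma map_smul_hmeas (d : ℝ) (hd : 0 ≤ d) {t : ℝ} (ht : t ≠ 0) :
    Measure.map (fun x : Plane => t • x) μH[d] = (‖t‖₊ ^ d)⁻¹ • μH[d] := by
  ext s hs
  rw [Measure.map_apply (measurable_const_smul t) hs]
  have h1 : (fun x : Plane => t • x) ⁻¹' s = t⁻¹ • s := by
    rw [Set.preimage_smul₀ ht]
  rw [h1, hmeas_smul d hd (inv_ne_zero ht), nnnorm_inv, NNReal.inv_rpow]
  rfl

lemma setIntegral_smul_set (d : ℝ) (hd : 0 ≤ d) {t : ℝ} (ht : 0 < t) (s : Set Plane)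
    (hs : MeasurableSet s) (f : Plane → ℝ) :
    ∫ x in t • s, f x ∂μH[d] = t ^ d * ∫ y in s, f (t • y) ∂μH[d] := by
  have ht' : t ≠ 0 := ht.ne'
  set e : Plane ≃ₜ Plane := Homeomorph.smulOfNeZero t ht'
  have hem : MeasurableEmbedding (fun x : Plane => t • x) :=
    e.measurableEmbedding
  have hnem : Measurable (fun x : Plane => t • x) := measurable_const_smul t
  have hts : MeasurableSet (t • s) := by
    rw [← Set.image_smul]
    exact hem.measurableSet_image' hs
  have hne : (‖t‖₊ ^ d : ℝ≥0) ≠ 0 :=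
    (NNReal.rpow_pos (nnnorm_pos.2 ht')).ne'
  have hμ : μH[d] = ((‖t‖₊ ^ d : ℝ≥0) : ℝ≥0∞) • Measure.map (fun x : Plane => t • x) μH[d] := by
    rw [map_smul_hmeas d hd ht', ENNReal.smul_def, smul_smul]
    norm_cast
    rw [mul_inv_cancel₀ hne, ENNReal.coe_one, one_smul]
  have hpre : (fun x : Plane => t • x) ⁻¹' (t • s) = s := by
    rw [Set.preimage_smul₀ ht', inv_smul_smul₀ ht']
  calc ∫ x in t • s, f x ∂μH[d]
      = ∫ x in t • s, f x ∂(((‖t‖₊ ^ d : ℝ≥0) : ℝ≥0∞) •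
          Measure.map (fun x : Plane => t • x) μH[d]) := by rw [← hμ]
    _ = (((‖t‖₊ ^ d : ℝ≥0) : ℝ≥0∞)).toReal •
          ∫ x in t • s, f x ∂(Measure.map (fun x : Plane => t • x) μH[d]) := by
        rw [Measure.restrict_smul, integral_smul_measure]
    _ = t ^ d * ∫ y in s, f (t • y) ∂μH[d] := by
        rw [Measure.restrict_map hnem hts, hpre, hem.integral_map]
        congr 1
        rw [ENNReal.coe_rpow_of_ne_zero (by simpa using ht'), ← ENNReal.toReal_rpow]
        simp [Real.nnnorm_of_nonneg ht.le]

lemma area_smul {t : ℝ} (ht : 0 < t) (s : Set Plane) :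
    area (t • s) = t ^ (2 : ℝ) * area s := by
  unfold area
  rw [hmeas_smul 2 (by norm_num) ht.ne' s, ENNReal.toReal_smul, NNReal.smul_def,
    NNReal.coe_rpow, coe_nnnorm, Real.norm_eq_abs, abs_of_pos ht, smul_eq_mul]

lemma perim_smul {t : ℝ} (ht : 0 < t) (s : Set Plane) :
    perim (t • s) = t * perim s := by
  unfold perim
  rw [frontier_smul' ht.ne' s, hmeas_smul 1 (by norm_num) ht.ne', ENNReal.toReal_smul,
    NNReal.smul_def, NNReal.coe_rpow, coe_nnnorm, Real.norm_eq_abs, abs_of_pos ht,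
    Real.rpow_one, smul_eq_mul]

lemma distInt_smul (p : ℝ) (hp : 0 ≤ p) {t : ℝ} (ht : 0 < t) {s : Set Plane}
    (hs : MeasurableSet s) :
    distInt p (t • s) = t ^ (p + 2) * distInt p s := by
  unfold distInt
  rw [frontier_smul' ht.ne' s, setIntegral_smul_set 2 (by norm_num) ht s hs]
  have h1 : ∀ y : Plane, infDist (t • y) (t • frontier s) ^ p
      = t ^ p * infDist y (frontier s) ^ p := by
    intro y
    rw [infDist_smul₀ ht.ne', Real.norm_eq_abs, abs_of_pos ht,
      Real.mul_rpow ht.le infDist_nonneg]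
  simp_rw [h1]
  rw [integral_const_mul, ← mul_assoc, ← Real.rpow_add ht]
  ring_nf

lemma Adm_smul {t : ℝ} (ht : 0 < t) {s : Set Plane} (hs : Adm s) : Adm (t • s) := by
  obtain ⟨hc, hconv, hdim⟩ := hs
  refine ⟨?_, hconv.smul t, ?_⟩
  · rw [← Set.image_smul]
    exact hc.image (continuous_const_smul t)
  · refine le_antisymm ?_ ?_
    · have h1 : dimH (t • s) ≤ dimH s := by
        rw [← Set.image_smul]
        exact (lipschitzWith_smul t).dimH_image_le s
      exact h1.trans_eq hdim
    · have h2 := (lipschitzWith_smul (t⁻¹ : ℝ)).dimH_image_le (t • s)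
      rw [Set.image_smul, inv_smul_smul₀ ht.ne'] at h2
      exact hdim.ge.trans h2

lemma energy_smul (p lam : ℝ) (hp : 0 ≤ p) {t : ℝ} (ht : 0 < t) {s : Set Plane}
    (hs : MeasurableSet s) :
    energy p lam (t • s) = distInt p s * t ^ (p + 2)
      + (lam * (perim s / area s)) * t⁻¹ := by
  unfold energy
  rw [distInt_smul p hp ht hs, perim_smul ht, area_smul ht]
  have h2 : t ^ (2 : ℝ) = t * t := by
    rw [show (2 : ℝ) = ((2 : ℕ) : ℝ) by norm_num, Real.rpow_natCast]
    ring
  rw [h2]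
  have h3 : t * perim s / (t * t * area s) = perim s / area s * t⁻¹ := by
    rw [mul_assoc, mul_div_mul_left _ _ ht.ne', mul_comm t (area s), ← div_div,
      div_eq_mul_inv (perim s / area s)]
  rw [h3]
  ring

end Aux

/-- every minimizer `Ω` of `E_{p,λ}` in `A` satisfies
`H¹(∂Ω)/H²(Ω) = ((p+2)/(λ(p+3))) ⬝ min_A E_{p,λ}`. -/
theorem stmt_2 (p lam : ℝ) (hp : 1 ≤ p) (hlam : 0 < lam)
    (Ω : Set Plane) (hΩ : Adm Ω)
    (hmin : ∀ Ω' : Set Plane, Adm Ω' → energy p lam Ω ≤ energy p lam Ω') :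
    perim Ω / area Ω =
      ((p + 2) / (lam * (p + 3))) * sInf (energy p lam '' {Ω' | Adm Ω'}) := by
  classical
  open scoped Pointwise in
  have hp0 : (0 : ℝ) ≤ p := le_trans zero_le_one hp
  have hΩm : MeasurableSet Ω := hΩ.1.measurableSet
  set a : ℝ := distInt p Ω with ha
  set b : ℝ := lam * (perim Ω / area Ω) with hb
  set f : ℝ → ℝ := fun t => a * t ^ (p + 2) + b * t⁻¹ with hf
  have hkey : ∀ t : ℝ, 0 < t → energy p lam (t • Ω) = f t := by
    intro t ht
    rw [hf]
    simp only []
    rw [energy_smul p lam hp0 ht hΩm, ← ha, ← hb]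
  have hf1 : f 1 = energy p lam Ω := by
    show a * (1 : ℝ) ^ (p + 2) + b * (1 : ℝ)⁻¹ = energy p lam Ω
    rw [Real.one_rpow, inv_one, mul_one, mul_one, energy, ha, hb]
  have hloc : IsLocalMin f 1 := by
    filter_upwards [eventually_gt_nhds zero_lt_one] with t ht
    rw [hf1, ← hkey t ht]
    exact hmin (t • Ω) (Adm_smul ht hΩ)
  have hderiv : HasDerivAt f (a * ((p + 2) * (1 : ℝ) ^ (p + 2 - 1)) + b * (-((1 : ℝ) ^ 2)⁻¹)) 1 :=
    ((Real.hasDerivAt_rpow_const (Or.inl one_ne_zero)).const_mul a).add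
      ((hasDerivAt_inv one_ne_zero).const_mul b)
  have h0 := hloc.hasDerivAt_eq_zero hderiv
  rw [Real.one_rpow] at h0
  have hab : a * (p + 2) = b := by nlinarith [h0]
  have hinf : sInf (energy p lam '' {Ω' | Adm Ω'}) = energy p lam Ω := by
    refine IsLeast.csInf_eq ⟨⟨Ω, hΩ, rfl⟩, ?_⟩
    rintro x ⟨Ω', h', rfl⟩
    exact hmin Ω' h'
  rw [hinf]
  have hE : energy p lam Ω = a + b := rfl
  rw [hE]
  have hp2 : p + 2 ≠ 0 := by linarith
  have hp3 : p + 3 ≠ 0 := by linarith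
  have hc : perim Ω / area Ω = b / lam := by
    rw [hb, mul_div_cancel_left₀ _ hlam.ne']
  rw [hc]
  field_simp
  nlinarith [hab]
end

section
/- Let p ≥ 1 and let Ω, Ω' ⊂ ℝ² be compact convex sets of Hausdorff dimension 2 with diam(Ω) ≤ D and diam(Ω') ≤ D. Then |∫_{Ω'} dist(x, ∂Ω')^p dx − ∫_Ω dist(x, ∂Ω)^p dx| ≤ H²(Ω' ∖ Ω)·D^p + H²(Ω ∖ Ω')·D^p + H²(Ω ∩ Ω')·d_H(∂Ω, ∂Ω')·p·D^{p−1}, where d_H denotes the Hausdorff distance. In particular, if Ω_n → Ω in symmetric-difference measure and d_H(∂Ω_n, ∂Ω) → 0 with uniformly bounded diameters, then ∫_{Ω_n} dist(x, ∂Ω_n)^p dx → ∫_Ω dist(x, ∂Ω)^p dx. -/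
open MeasureTheory Metric Set Filter
open scoped Topology ENNReal NNReal

/-!
Split `Ω' = (Ω' \ Ω) ∪ (Ω ∩ Ω')` and `Ω = (Ω \ Ω') ∪ (Ω ∩ Ω')`. On the two differences the
integrands are at most `D ^ p`, because a point of a compact set lies within its diameter of its
(nonempty) frontier. On the intersection, `x ↦ dist(x, ∂Ω)` and `x ↦ dist(x, ∂Ω')` differ by at most
`d_H(∂Ω, ∂Ω')`, and `t ↦ t ^ p` is `p D ^ (p - 1)`-Lipschitz on `[0, D]`. The convergence statement
follows by letting the right-hand side tend to zero, bounding `H²(Ω ∩ Ωₙ)` by `H²(Ω)`.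
-/

instance : IsFiniteMeasureOnCompacts (μH[2] : Measure Plane) := by
  have h : (2 : ℝ) = Module.finrank ℝ Plane := by simp
  rw [h]; infer_instance

lemma abs_rpow_sub_rpow_le {p D a b : ℝ} (hp : 1 ≤ p) (ha : a ∈ Icc 0 D) (hb : b ∈ Icc 0 D) :
    |b ^ p - a ^ p| ≤ p * D ^ (p - 1) * |b - a| := by
  refine (convex_Icc 0 D).norm_image_sub_le_of_norm_hasDerivWithin_le
    (fun x _ => (Real.hasDerivAt_rpow_const (Or.inr hp)).hasDerivWithinAt)
    (fun x hx => ?_) ha hb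
  rw [Real.norm_eq_abs, abs_of_nonneg (by have := hx.1; positivity)]
  exact mul_le_mul_of_nonneg_left (Real.rpow_le_rpow hx.1 hx.2 (by linarith)) (by linarith)

lemma IsCompact.nonempty_frontier {α : Type*} [TopologicalSpace α] [PreconnectedSpace α]
    [NoncompactSpace α] {s : Set α} (hs : IsCompact s) (hne : s.Nonempty) :
    (frontier s).Nonempty :=
  nonempty_frontier_iff.2 ⟨hne, fun h => noncompact_univ α (h ▸ hs)⟩

section MetricSpace

variable {α : Type*} [PseudoMetricSpace α] {s t : Set α} {x : α}

lemma infDist_le_diam_of_subset (hs : Bornology.IsBounded s) (hx : x ∈ s) (hts : t ⊆ s)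
    (ht : t.Nonempty) : infDist x t ≤ diam s := by
  obtain ⟨y, hy⟩ := ht
  exact (infDist_le_dist_of_mem hy).trans (dist_le_diam_of_mem hs hx (hts hy))

lemma abs_infDist_sub_infDist_le_hausdorffDist (h : hausdorffEDist s t ≠ ⊤) :
    |infDist x t - infDist x s| ≤ hausdorffDist s t := by
  have h' : hausdorffEDist t s ≠ ⊤ := by rwa [hausdorffEDist_comm]
  have h1 := infDist_le_infDist_add_hausdorffDist (x := x) h
  have h2 := infDist_le_infDist_add_hausdorffDist (x := x) h'
  rw [hausdorffDist_comm] at h2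
  exact abs_sub_le_iff.2 ⟨by linarith, by linarith⟩

end MetricSpace

lemma IsCompact.infDist_frontier_le_diam {α : Type*} [MetricSpace α] [PreconnectedSpace α]
    [NoncompactSpace α] {s : Set α} {x : α} (hs : IsCompact s) (hx : x ∈ s) :
    infDist x (frontier s) ≤ diam s :=
  infDist_le_diam_of_subset hs.isBounded hx hs.isClosed.frontier_subset
    (hs.nonempty_frontier ⟨x, hx⟩)

section SetIntegral

variable {α : Type*} [MeasurableSpace α] {μ : Measure α} {s t : Set α} {f g : α → ℝ} {M L : ℝ}

lemma abs_setIntegral_sub_setIntegral_le (hs : MeasurableSet s) (ht : MeasurableSet t)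
    (hμs : μ s < ∞) (hμt : μ t < ∞) (hf : IntegrableOn f s μ) (hg : IntegrableOn g t μ)
    (hgM : ∀ x ∈ t \ s, |g x| ≤ M) (hfM : ∀ x ∈ s \ t, |f x| ≤ M)
    (hfg : ∀ x ∈ s ∩ t, |g x - f x| ≤ L) :
    |∫ x in t, g x ∂μ - ∫ x in s, f x ∂μ| ≤
      μ.real (t \ s) * M + μ.real (s \ t) * M + μ.real (s ∩ t) * L := by
  have hsplit : ∫ x in t, g x ∂μ - ∫ x in s, f x ∂μ =
      (∫ x in t \ s, g x ∂μ) - (∫ x in s \ t, f x ∂μ) + ∫ x in s ∩ t, (g x - f x) ∂μ := by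
    rw [← integral_inter_add_sdiff ht hf, ← integral_inter_add_sdiff hs hg, inter_comm t s,
      integral_sub (hg.mono_set inter_subset_right) (hf.mono_set inter_subset_left)]
    ring
  have hgt : ‖∫ x in t \ s, g x ∂μ‖ ≤ M * μ.real (t \ s) :=
    norm_setIntegral_le_of_norm_le_const ((measure_mono sdiff_subset).trans_lt hμt) hgM
  have hfs : ‖∫ x in s \ t, f x ∂μ‖ ≤ M * μ.real (s \ t) :=
    norm_setIntegral_le_of_norm_le_const ((measure_mono sdiff_subset).trans_lt hμs) hfM
  have hst : ‖∫ x in s ∩ t, (g x - f x) ∂μ‖ ≤ L * μ.real (s ∩ t) :=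
    norm_setIntegral_le_of_norm_le_const ((measure_mono inter_subset_left).trans_lt hμs) hfg
  rw [hsplit]
  simp only [Real.norm_eq_abs] at hgt hfs hst
  linarith [abs_add_le (∫ x in t \ s, g x ∂μ - ∫ x in s \ t, f x ∂μ)
    (∫ x in s ∩ t, (g x - f x) ∂μ), abs_sub (∫ x in t \ s, g x ∂μ) (∫ x in s \ t, f x ∂μ)]

end SetIntegral

lemma tendsto_measureReal_sdiff_of_tendsto_symmDiff {α ι : Type*} [MeasurableSpace α]
    {μ : Measure α} {l : Filter ι} {s t : ι → Set α}
    (h : Tendsto (fun n => μ (symmDiff (s n) (t n))) l (𝓝 0)) :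
    Tendsto (fun n => μ.real (s n \ t n)) l (𝓝 0) := by
  have h' : Tendsto (fun n => μ (s n \ t n)) l (𝓝 0) :=
    tendsto_of_tendsto_of_tendsto_of_le_of_le tendsto_const_nhds h (fun _ => bot_le)
      fun _ => measure_mono fun _ hx => Or.inl hx
  simpa [Function.comp_def, measureReal_def] using
    (ENNReal.tendsto_toReal ENNReal.zero_ne_top).comp h'

lemma abs_distInt_sub_distInt_le {p D : ℝ} (hp : 1 ≤ p) {Ω Ω' : Set Plane}
    (hΩ : IsCompact Ω) (hΩ' : IsCompact Ω') (hne : Ω.Nonempty) (hne' : Ω'.Nonempty)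
    (hD : diam Ω ≤ D) (hD' : diam Ω' ≤ D) :
    |distInt p Ω' - distInt p Ω| ≤
      μH[2].real (Ω' \ Ω) * D ^ p + μH[2].real (Ω \ Ω') * D ^ p +
        μH[2].real (Ω ∩ Ω') * hausdorffDist (frontier Ω) (frontier Ω') * p * D ^ (p - 1) := by
  have hp0 : 0 ≤ p := by linarith
  have hdist : ∀ {K : Set Plane}, IsCompact K → diam K ≤ D → ∀ x ∈ K,
      infDist x (frontier K) ∈ Icc 0 D := fun hK hKD x hx =>
    ⟨infDist_nonneg, (hK.infDist_frontier_le_diam hx).trans hKD⟩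
  have hpow : ∀ {K : Set Plane}, IsCompact K → diam K ≤ D → ∀ x ∈ K,
      |infDist x (frontier K) ^ p| ≤ D ^ p := fun hK hKD x hx => by
    obtain ⟨h0, hle⟩ := hdist hK hKD x hx
    rw [abs_of_nonneg (by positivity)]
    exact Real.rpow_le_rpow h0 hle hp0
  have hfin : hausdorffEDist (frontier Ω) (frontier Ω') ≠ ⊤ :=
    hausdorffEDist_ne_top_of_nonempty_of_bounded (hΩ.nonempty_frontier hne)
      (hΩ'.nonempty_frontier hne') (hΩ.isBounded.subset hΩ.isClosed.frontier_subset)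
      (hΩ'.isBounded.subset hΩ'.isClosed.frontier_subset)
  have hcont : ∀ K : Set Plane, Continuous fun x => infDist x (frontier K) ^ p := fun K =>
    (continuous_infDist_pt _).rpow_const fun _ => Or.inr hp0
  refine (abs_setIntegral_sub_setIntegral_le
    (L := p * D ^ (p - 1) * hausdorffDist (frontier Ω) (frontier Ω')) hΩ.measurableSet
    hΩ'.measurableSet hΩ.measure_lt_top hΩ'.measure_lt_top
    ((hcont Ω).continuousOn.integrableOn_compact hΩ)
    ((hcont Ω').continuousOn.integrableOn_compact hΩ') (fun x hx => hpow hΩ' hD' x hx.1)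
    (fun x hx => hpow hΩ hD x hx.1) fun x hx => ?_).trans_eq (by ring)
  calc _ ≤ p * D ^ (p - 1) * |infDist x (frontier Ω') - infDist x (frontier Ω)| :=
        abs_rpow_sub_rpow_le hp (hdist hΩ hD x hx.1) (hdist hΩ' hD' x hx.2)
    _ ≤ _ := mul_le_mul_of_nonneg_left (abs_infDist_sub_infDist_le_hausdorffDist hfin)
      (mul_nonneg hp0 (Real.rpow_nonneg (diam_nonneg.trans hD) _))

lemma tendsto_distInt {p D : ℝ} (hp : 1 ≤ p) {Ω : ℕ → Set Plane} {K : Set Plane}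
    (hΩ : ∀ n, IsCompact (Ω n)) (hne : ∀ n, (Ω n).Nonempty) (hK : IsCompact K)
    (hKne : K.Nonempty) (hΩD : ∀ n, diam (Ω n) ≤ D) (hKD : diam K ≤ D)
    (hsymm : Tendsto (fun n => μH[2] (symmDiff (Ω n) K)) atTop (𝓝 0))
    (hhd : Tendsto (fun n => hausdorffDist (frontier (Ω n)) (frontier K)) atTop (𝓝 0)) :
    Tendsto (fun n => distInt p (Ω n)) atTop (𝓝 (distInt p K)) := by
  have hbound : ∀ n, dist (distInt p (Ω n)) (distInt p K) ≤
      μH[2].real (Ω n \ K) * D ^ p + μH[2].real (K \ Ω n) * D ^ p +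
        μH[2].real K * hausdorffDist (frontier (Ω n)) (frontier K) * p * D ^ (p - 1) := by
    intro n
    rw [Real.dist_eq, hausdorffDist_comm]
    refine (abs_distInt_sub_distInt_le hp hK (hΩ n) hKne (hne n) hKD (hΩD n)).trans ?_
    have hμ : μH[2].real (K ∩ Ω n) ≤ μH[2].real K :=
      measureReal_mono inter_subset_left hK.measure_lt_top.ne
    have hD0 : 0 ≤ D := diam_nonneg.trans hKD
    have hr : 0 ≤ hausdorffDist (frontier K) (frontier (Ω n)) := hausdorffDist_nonneg
    have hp0 : 0 ≤ p := by linarith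
    gcongr
  have hlim : Tendsto (fun n => μH[2].real (Ω n \ K) * D ^ p + μH[2].real (K \ Ω n) * D ^ p +
      μH[2].real K * hausdorffDist (frontier (Ω n)) (frontier K) * p * D ^ (p - 1))
      atTop (𝓝 0) := by
    have hout := tendsto_measureReal_sdiff_of_tendsto_symmDiff hsymm
    have hin := tendsto_measureReal_sdiff_of_tendsto_symmDiff (s := fun _ => K) (t := Ω)
      (by simpa only [symmDiff_comm] using hsymm)
    simpa using ((hout.mul_const _).add (hin.mul_const _)).add
      (((hhd.const_mul _).mul_const p).mul_const _)
  exact tendsto_iff_dist_tendsto_zero.2 (squeeze_zero (fun _ => dist_nonneg) hbound hlim)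

/-- quantitative continuity of the average-distance term with respect to
symmetric-difference measure and Hausdorff distance of the boundaries, together with the
resulting convergence along sequences. -/
theorem stmt_12 (p : ℝ) (hp : 1 ≤ p) :
    (∀ (D : ℝ) (Ω Ω' : Set Plane),
      IsCompact Ω → Convex ℝ Ω → dimH Ω = 2 →
      IsCompact Ω' → Convex ℝ Ω' → dimH Ω' = 2 →
      Metric.diam Ω ≤ D → Metric.diam Ω' ≤ D →
      |distInt p Ω' - distInt p Ω| ≤
        (μH[2] (Ω' \ Ω)).toReal * D ^ p + (μH[2] (Ω \ Ω')).toReal * D ^ p +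
          (μH[2] (Ω ∩ Ω')).toReal * hausdorffDist (frontier Ω) (frontier Ω') * p *
            D ^ (p - 1)) ∧
    (∀ (D : ℝ) (Ω : ℕ → Set Plane) (Ωlim : Set Plane),
      (∀ n, IsCompact (Ω n) ∧ Convex ℝ (Ω n) ∧ dimH (Ω n) = 2) →
      IsCompact Ωlim → Convex ℝ Ωlim → dimH Ωlim = 2 →
      (∀ n, Metric.diam (Ω n) ≤ D) → Metric.diam Ωlim ≤ D →
      Tendsto (fun n => μH[2] (symmDiff (Ω n) Ωlim)) atTop (𝓝 0) →
      Tendsto (fun n => hausdorffDist (frontier (Ω n)) (frontier Ωlim)) atTop (𝓝 0) →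
      Tendsto (fun n => distInt p (Ω n)) atTop (𝓝 (distInt p Ωlim))) := by
  have nonempty_of_dimH : ∀ {K : Set Plane}, dimH K = 2 → K.Nonempty := fun hK =>
    nonempty_iff_ne_empty.2 fun h => by simp [h] at hK
  refine ⟨fun D Ω Ω' hΩ _ hΩdim hΩ' _ hΩ'dim hD hD' => ?_,
    fun D Ω K hΩ hK _ hKdim hΩD hKD hsymm hhd => ?_⟩
  · exact abs_distInt_sub_distInt_le hp hΩ hΩ' (nonempty_of_dimH hΩdim)
      (nonempty_of_dimH hΩ'dim) hD hD'
  · exact tendsto_distInt hp (fun n => (hΩ n).1) (fun n => nonempty_of_dimH (hΩ n).2.2) hK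
      (nonempty_of_dimH hKdim) hΩD hKD hsymm hhd
end
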